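/- Let f : ℝ^{m×n} → ℝ be differentiable and L-Lipschitz smooth in Frobenius norm, and let r = min(m,n). For the Muon update W' = W − η·UV^T, where UV^T is obtained from the thin SVD of ∇f(W) = U S V^T, one has f(W') ≤ f(W) − η‖∇f(W)‖_* + (r L η²)/2. -/

import Mathlib

/-!
Along the segment `t ↦ W + t D` the Lipschitz bound on the gradient makes the directional
derivative grow at most linearly, which integrates to the quadratic upper bound
`f (W + D) ≤ f W + ⟨∇f W, D⟩ + L ‖D‖_F² / 2`. For `D = -η U Vᵀ` with `∇f W = U Σ Vᵀ`, the
inner product is `-η tr Σ = -η ‖∇f W‖_*`: the positive semidefinite matrix `V Σ Vᵀ` squares to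
`∇f Wᵀ ∇f W`, so it is `√(∇f Wᵀ ∇f W)`, whose trace is the nuclear norm. Finally
`‖U Vᵀ‖_F² = k ≤ min m n` since `U` and `V` have orthonormal columns.
-/

open scoped BigOperators
open Matrix

/-- Frobenius norm of a real matrix. -/
noncomputable def frobNorm {m n : ℕ} (A : Matrix (Fin m) (Fin n) ℝ) : ℝ :=
  Real.sqrt (∑ i, ∑ j, (A i j) ^ 2)

/-- Nuclear norm of a real matrix: the sum of its singular values. -/
noncomputable def nucNorm {m n : ℕ} (A : Matrix (Fin m) (Fin n) ℝ) : ℝ :=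
  ∑ j, Real.sqrt ((Matrix.isHermitian_conjTranspose_mul_self A).eigenvalues j)

theorem le_quadratic_of_deriv_sub_le {g φ : ℝ → ℝ} {q : ℝ}
    (hg : ∀ t, HasDerivAt g (φ t) t) (hφ : ∀ t ∈ Set.Icc (0 : ℝ) 1, φ t - φ 0 ≤ q * t) :
    g 1 ≤ g 0 + φ 0 + q / 2 := by
  set h : ℝ → ℝ := fun t => g t - φ 0 * t - q * t ^ 2 / 2
  have hh : ∀ t, HasDerivAt h (φ t - φ 0 - q * t) t := fun t => by
    have hquad : HasDerivAt (fun t : ℝ => q * t ^ 2 / 2) (q * t) t :=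
      ((hasDerivAt_pow 2 t).const_mul q).div_const 2 |>.congr_deriv (by ring)
    exact ((hg t).sub ((hasDerivAt_id t).const_mul (φ 0))).sub hquad |>.congr_deriv (by simp)
  have hanti : AntitoneOn h (Set.Icc 0 1) := by
    refine antitoneOn_of_hasDerivWithinAt_nonpos (convex_Icc 0 1)
      (fun t _ => (hh t).continuousAt.continuousWithinAt) (fun t _ => (hh t).hasDerivWithinAt)
      fun t ht => ?_
    linarith [hφ t (interior_subset ht)]
  have h10 := hanti (Set.left_mem_Icc.mpr zero_le_one) (Set.right_mem_Icc.mpr zero_le_one)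
    zero_le_one
  simp only [h] at h10
  linarith

theorem hasDerivAt_comp_line {E : Type*} [AddCommGroup E] [Module ℝ E] {F F' : E → ℝ} (v : E)
    (hF : ∀ x, HasDerivAt (fun t : ℝ => F (x + t • v)) (F' x) 0) (x : E) (s : ℝ) :
    HasDerivAt (fun t : ℝ => F (x + t • v)) (F' (x + s • v)) s := by
  have hshift : HasDerivAt (fun t : ℝ => F (x + s • v + (t - s) • v)) (F' (x + s • v)) s :=
    HasDerivAt.comp_sub_const (f := fun t : ℝ => F (x + s • v + t • v)) s s
      (by simpa using hF (x + s • v))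
  convert hshift using 3 with t
  rw [sub_smul]
  abel

section Frobenius

variable {m n : ℕ}

theorem frobNorm_nonneg (A : Matrix (Fin m) (Fin n) ℝ) : 0 ≤ frobNorm A :=
  Real.sqrt_nonneg _

theorem sq_frobNorm (A : Matrix (Fin m) (Fin n) ℝ) :
    frobNorm A ^ 2 = ∑ i, ∑ j, A i j ^ 2 :=
  Real.sq_sqrt <| Finset.sum_nonneg fun _ _ => Finset.sum_nonneg fun _ _ => sq_nonneg _

theorem frobNorm_smul (t : ℝ) (A : Matrix (Fin m) (Fin n) ℝ) :
    frobNorm (t • A) = |t| * frobNorm A := by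
  simp only [frobNorm, Matrix.smul_apply, smul_eq_mul, mul_pow, ← Finset.mul_sum]
  rw [Real.sqrt_mul (sq_nonneg t), Real.sqrt_sq_eq_abs]

theorem sum_sum_mul_le_frobNorm_mul (A B : Matrix (Fin m) (Fin n) ℝ) :
    ∑ i, ∑ j, A i j * B i j ≤ frobNorm A * frobNorm B := by
  simp only [frobNorm, ← Fintype.sum_prod_type']
  exact Real.sum_mul_le_sqrt_mul_sqrt _ _ _

end Frobenius

theorem apply_add_le_of_frobNorm_lipschitz {m n : ℕ} (f : Matrix (Fin m) (Fin n) ℝ → ℝ)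
    (gradf : Matrix (Fin m) (Fin n) ℝ → Matrix (Fin m) (Fin n) ℝ)
    (hgrad : ∀ W V : Matrix (Fin m) (Fin n) ℝ,
      HasDerivAt (fun t : ℝ => f (W + t • V)) (∑ i, ∑ j, gradf W i j * V i j) 0)
    (L : ℝ) (hLip : ∀ W W' : Matrix (Fin m) (Fin n) ℝ,
      frobNorm (gradf W - gradf W') ≤ L * frobNorm (W - W'))
    (W D : Matrix (Fin m) (Fin n) ℝ) :
    f (W + D) ≤ f W + ∑ i, ∑ j, gradf W i j * D i j + L * frobNorm D ^ 2 / 2 := by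
  set φ : ℝ → ℝ := fun t => ∑ i, ∑ j, gradf (W + t • D) i j * D i j
  have hφ : ∀ t ∈ Set.Icc (0 : ℝ) 1, φ t - φ 0 ≤ L * frobNorm D ^ 2 * t := by
    intro t ht
    have hdiff : φ t - φ 0 = ∑ i, ∑ j, (gradf (W + t • D) - gradf W) i j * D i j := by
      simp [φ, sub_mul]
    have hgap : frobNorm (gradf (W + t • D) - gradf W) ≤ L * (t * frobNorm D) := by
      simpa [frobNorm_smul, abs_of_nonneg ht.1] using hLip (W + t • D) W
    calc φ t - φ 0 ≤ frobNorm (gradf (W + t • D) - gradf W) * frobNorm D :=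
          hdiff ▸ sum_sum_mul_le_frobNorm_mul _ _
      _ ≤ L * (t * frobNorm D) * frobNorm D := by gcongr; exact frobNorm_nonneg D
      _ = L * frobNorm D ^ 2 * t := by ring
  simpa [φ] using le_quadratic_of_deriv_sub_le (hasDerivAt_comp_line D (hgrad · D) W) hφ

theorem sum_sum_mul_eq_trace_transpose_mul {m n R : Type*} [Fintype m] [Fintype n]
    [CommSemiring R] (A B : Matrix m n R) :
    ∑ i, ∑ j, A i j * B i j = trace (Aᵀ * B) := by
  rw [Finset.sum_comm]
  simp [trace, mul_apply]

theorem card_le_of_transpose_mul_self_eq_one {m k R : Type*} [Fintype m] [Fintype k]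
    [DecidableEq k] [CommRing R] [Nontrivial R] {U : Matrix m k R} (hU : Uᵀ * U = 1) :
    Fintype.card k ≤ Fintype.card m := by
  calc Fintype.card k = (Uᵀ * U).rank := by rw [hU, rank_one]
    _ ≤ U.rank := rank_mul_le_right _ _
    _ ≤ Fintype.card m := rank_le_card_height U

section ThinSVD

variable {m n k R : Type*} [Fintype m] [Fintype n] [Fintype k] [DecidableEq k] [CommRing R]
  {U : Matrix m k R} {V : Matrix n k R}

theorem trace_transpose_mul_of_orthonormal_columns (hU : Uᵀ * U = 1) (hV : Vᵀ * V = 1)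
    (σ τ : k → R) :
    trace ((U * diagonal σ * Vᵀ)ᵀ * (U * diagonal τ * Vᵀ)) = ∑ i, σ i * τ i := by
  calc trace ((U * diagonal σ * Vᵀ)ᵀ * (U * diagonal τ * Vᵀ))
      = trace (V * diagonal σ * (Uᵀ * U) * diagonal τ * Vᵀ) := by
        simp only [transpose_mul, transpose_transpose, diagonal_transpose, Matrix.mul_assoc]
    _ = trace (Vᵀ * V * diagonal σ * diagonal τ) := by
        rw [hU, Matrix.mul_one, trace_mul_comm]
        simp only [Matrix.mul_assoc]
    _ = ∑ i, σ i * τ i := by rw [hV, Matrix.one_mul, diagonal_mul_diagonal, trace_diagonal]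

theorem sum_sum_mul_mul_transpose_of_orthonormal_columns (hU : Uᵀ * U = 1) (hV : Vᵀ * V = 1)
    (σ : k → R) :
    ∑ i, ∑ j, (U * diagonal σ * Vᵀ) i j * (U * Vᵀ) i j = ∑ i, σ i := by
  simpa [sum_sum_mul_eq_trace_transpose_mul] using
    trace_transpose_mul_of_orthonormal_columns hU hV σ 1

end ThinSVD

open scoped MatrixOrder in
theorem trace_sqrt_of_posSemidef {n : Type*} [Fintype n] [DecidableEq n]
    {B : Matrix n n ℝ} (hB : B.PosSemidef) :
    trace (CFC.sqrt B) = ∑ j, √(hB.1.eigenvalues j) := by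
  rw [CFC.sqrt_eq_cfc, cfc_nnreal_eq_real _ B, hB.1.cfc_eq, IsHermitian.cfc,
    Unitary.conjStarAlgAut_apply, trace_mul_comm, ← Matrix.mul_assoc,
    Unitary.coe_star_mul_self, Matrix.one_mul, trace_diagonal]
  simp [max_eq_left (hB.eigenvalues_nonneg _)]

section NuclearNorm

variable {m n : ℕ} {k : Type*} [Fintype k] [DecidableEq k]
  {U : Matrix (Fin m) k ℝ} {V : Matrix (Fin n) k ℝ}

theorem sq_frobNorm_mul_transpose_of_orthonormal_columns (hU : Uᵀ * U = 1) (hV : Vᵀ * V = 1) :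
    frobNorm (U * Vᵀ) ^ 2 = Fintype.card k := by
  rw [sq_frobNorm]
  simp only [sq]
  rw [sum_sum_mul_eq_trace_transpose_mul]
  simpa using trace_transpose_mul_of_orthonormal_columns hU hV 1 1

open scoped MatrixOrder in
theorem nucNorm_eq_trace_sqrt (A : Matrix (Fin m) (Fin n) ℝ) :
    nucNorm A = trace (CFC.sqrt (Aᴴ * A)) := by
  rw [trace_sqrt_of_posSemidef (posSemidef_conjTranspose_mul_self A), nucNorm]

open scoped MatrixOrder in
theorem nucNorm_of_orthonormal_columns (hU : Uᵀ * U = 1) (hV : Vᵀ * V = 1) {σ : k → ℝ}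
    (hσ : ∀ i, 0 ≤ σ i) :
    nucNorm (U * diagonal σ * Vᵀ) = ∑ i, σ i := by
  set A := U * diagonal σ * Vᵀ
  have hpsd : (V * diagonal σ * Vᵀ).PosSemidef := by
    simpa [conjTranspose_eq_transpose_of_trivial] using
      (posSemidef_diagonal_iff.mpr hσ).mul_mul_conjTranspose_same V
  have hsq : V * diagonal σ * Vᵀ * (V * diagonal σ * Vᵀ) = Aᴴ * A := by
    simp only [A, conjTranspose_eq_transpose_of_trivial, transpose_mul, transpose_transpose,
      diagonal_transpose, Matrix.mul_assoc]
    rw [← Matrix.mul_assoc Vᵀ V, hV, ← Matrix.mul_assoc Uᵀ U, hU]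
  rw [nucNorm_eq_trace_sqrt, CFC.sqrt_unique hsq hpsd.nonneg, trace_mul_comm, ← Matrix.mul_assoc,
    hV, Matrix.one_mul, trace_diagonal]

end NuclearNorm

theorem muon_descent_frobenius_smooth_general
    {m n k : ℕ} (f : Matrix (Fin m) (Fin n) ℝ → ℝ)
    (gradf : Matrix (Fin m) (Fin n) ℝ → Matrix (Fin m) (Fin n) ℝ)
    (hgrad : ∀ W V : Matrix (Fin m) (Fin n) ℝ,
      HasDerivAt (fun t : ℝ => f (W + t • V)) (∑ i, ∑ j, gradf W i j * V i j) 0)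
    (L : ℝ) (hL : 0 ≤ L)
    (hLip : ∀ W W' : Matrix (Fin m) (Fin n) ℝ,
      frobNorm (gradf W - gradf W') ≤ L * frobNorm (W - W'))
    (η : ℝ)
    (W : Matrix (Fin m) (Fin n) ℝ)
    (U : Matrix (Fin m) (Fin k) ℝ) (V : Matrix (Fin n) (Fin k) ℝ)
    (σ : Fin k → ℝ) (hσ : ∀ i, 0 < σ i)
    (hU : Uᵀ * U = 1) (hV : Vᵀ * V = 1)
    (hSVD : gradf W = U * Matrix.diagonal σ * Vᵀ) :
    f (W - η • (U * Vᵀ)) ≤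
      f W - η * nucNorm (gradf W) + (min m n : ℝ) * L * η ^ 2 / 2 := by
  have hk : (k : ℝ) ≤ min (m : ℝ) n := by
    have hkm := card_le_of_transpose_mul_self_eq_one hU
    have hkn := card_le_of_transpose_mul_self_eq_one hV
    simp only [Fintype.card_fin] at hkm hkn
    exact le_min (by exact_mod_cast hkm) (by exact_mod_cast hkn)
  have hinner : ∑ i, ∑ j, gradf W i j * (-η • (U * Vᵀ)) i j = -η * nucNorm (gradf W) := by
    simp only [Matrix.smul_apply, smul_eq_mul, mul_left_comm _ (-η), ← Finset.mul_sum]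
    rw [hSVD, sum_sum_mul_mul_transpose_of_orthonormal_columns hU hV,
      nucNorm_of_orthonormal_columns hU hV fun i => (hσ i).le]
  have hstep := apply_add_le_of_frobNorm_lipschitz f gradf hgrad L hLip W (-η • (U * Vᵀ))
  rw [hinner, frobNorm_smul, mul_pow, sq_abs, neg_sq,
    sq_frobNorm_mul_transpose_of_orthonormal_columns hU hV, Fintype.card_fin] at hstep
  rw [sub_eq_add_neg, ← neg_smul]
  linarith [mul_le_mul_of_nonneg_left hk (mul_nonneg hL (sq_nonneg η))]

/-- Descent lemma for the Muon update under `L`-Lipschitz smoothness in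
Frobenius norm, where `U Vᵀ` comes from the thin SVD of `∇f(W)` and
`r = min (m, n)`. -/
theorem muon_descent_frobenius_smooth
    {m n k : ℕ} (f : Matrix (Fin m) (Fin n) ℝ → ℝ)
    (gradf : Matrix (Fin m) (Fin n) ℝ → Matrix (Fin m) (Fin n) ℝ)
    (hgrad : ∀ W V : Matrix (Fin m) (Fin n) ℝ,
      HasDerivAt (fun t : ℝ => f (W + t • V)) (∑ i, ∑ j, gradf W i j * V i j) 0)
    (L : ℝ) (hL : 0 ≤ L)
    (hLip : ∀ W W' : Matrix (Fin m) (Fin n) ℝ,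
      frobNorm (gradf W - gradf W') ≤ L * frobNorm (W - W'))
    (η : ℝ) (hη : 0 ≤ η)
    (W : Matrix (Fin m) (Fin n) ℝ)
    (U : Matrix (Fin m) (Fin k) ℝ) (V : Matrix (Fin n) (Fin k) ℝ)
    (σ : Fin k → ℝ) (hσ : ∀ i, 0 < σ i)
    (hU : Uᵀ * U = 1) (hV : Vᵀ * V = 1)
    (hSVD : gradf W = U * Matrix.diagonal σ * Vᵀ) :
    f (W - η • (U * Vᵀ)) ≤
      f W - η * nucNorm (gradf W) + (min m n : ℝ) * L * η ^ 2 / 2 :=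
  muon_descent_frobenius_smooth_general f gradf hgrad L hL hLip η W U V σ hσ hU hV hSVD
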